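/- Let 1/2 < μ ≤ 1. Then no point of the set ⋃_{n≥1} ⋃_{i=1}^{2^{n−1}} ( (2i−1)/2ⁿ − (1 − h_μ(μ))/2ⁿ , (2i−1)/2ⁿ + (1 − h_μ(μ))/2ⁿ ) belongs to the range of h_μ; that is, for every n ≥ 1, every i with 1 ≤ i ≤ 2^{n−1}, and every x ∈ [0,1], the value h_μ(x) does not lie in the open interval centered at (2i−1)/2ⁿ of radius (1 − h_μ(μ))/2ⁿ. -/

import Mathlib

/-!
On `[0, μ]` the commuter is monotone: comparing `h y` and `h w` through the functional
equation either separates them by `1/2` or reduces to the same comparison for their images,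
with the error halved. Hence `h ≤ h μ` on `[0, μ]`, i.e. `h y` stays at distance
`r = 1 - h μ` from the odd integers. Since `2 h x` equals `h y` or `2 - h y` for some
`y ∈ [0, μ]`, induction shows that `2ⁿ h x` stays at distance `r` from the odd integers
for every `n ≥ 1` and `x ∈ [0, 1]`, which is the claim after dividing by `2ⁿ`.
-/

open Set

/-- `h : [0,1] → [0,1]` satisfies the commuter functional equation for `T_μ`:
`h(x) = (1/2)·h(2μx)` for `0 ≤ x ≤ 1/2` and `h(x) = 1 - (1/2)·h(2μ(1-x))` for `1/2 < x ≤ 1`. -/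
def IsCommuter (μ : ℝ) (h : ℝ → ℝ) : Prop :=
  (∀ x ∈ Icc (0:ℝ) 1, h x ∈ Icc (0:ℝ) 1) ∧
  (∀ x : ℝ, 0 ≤ x → x ≤ 1/2 → h x = (1/2) * h (2*μ*x)) ∧
  (∀ x : ℝ, 1/2 < x → x ≤ 1 → h x = 1 - (1/2) * h (2*μ*(1-x)))

def FarFromOdd (r t : ℝ) : Prop :=
  ∀ m : ℤ, r ≤ |t - (2 * m + 1)|

theorem FarFromOdd.two_mul_sub {r t : ℝ} (ht : FarFromOdd r t) (k : ℤ) :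
    FarFromOdd r (2 * k - t) := by
  intro m
  calc r ≤ |t - (2 * ((k - m - 1 : ℤ) : ℝ) + 1)| := ht _
    _ = |2 * k - t - (2 * m + 1)| := by
      rw [← abs_neg]
      push_cast
      ring_nf

namespace IsCommuter

variable {μ : ℝ} {h : ℝ → ℝ}

theorem apply_le_apply_add_half_pow (hc : IsCommuter μ h) (hμ0 : 0 ≤ μ) (hμ1 : μ ≤ 1)
    (k : ℕ) {y w : ℝ} (hy : y ∈ Icc 0 μ) (hw : w ∈ Icc 0 μ) (hyw : y ≤ w) :
    h y ≤ h w + (1 / 2) ^ k := by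
  obtain ⟨hmem, hleft, hright⟩ := hc
  have hmem' : ∀ z ∈ Icc 0 μ, h z ∈ Icc (0 : ℝ) 1 := fun z hz =>
    hmem z ⟨hz.1, hz.2.trans hμ1⟩
  induction k generalizing y w with
  | zero =>
    linarith [(hmem' y hy).2, (hmem' w hw).1]
  | succ k ih =>
    rw [pow_succ]
    rcases le_or_gt w (1 / 2) with hw_half | hw_half
    · have := ih (y := 2 * μ * y) (w := 2 * μ * w) ⟨by nlinarith [hy.1], by nlinarith⟩
        ⟨by nlinarith [hw.1], by nlinarith⟩ (by nlinarith)
      rw [hleft y hy.1 (hyw.trans hw_half), hleft w hw.1 hw_half]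
      linarith
    rcases le_or_gt y (1 / 2) with hy_half | hy_half
    · have hμy : 2 * μ * y ∈ Icc 0 μ := ⟨by nlinarith [hy.1], by nlinarith⟩
      have hμw : 2 * μ * (1 - w) ∈ Icc 0 μ := ⟨by nlinarith [hw.2], by nlinarith⟩
      rw [hleft y hy.1 hy_half, hright w hw_half (hw.2.trans hμ1)]
      linarith [(hmem' _ hμy).2, (hmem' _ hμw).2, pow_pos (by norm_num : (0 : ℝ) < 1 / 2) k]
    · have := ih (y := 2 * μ * (1 - w)) (w := 2 * μ * (1 - y))
        ⟨by nlinarith [hw.2], by nlinarith⟩ ⟨by nlinarith [hy.2], by nlinarith⟩ (by nlinarith)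
      rw [hright y hy_half (hy.2.trans hμ1), hright w hw_half (hw.2.trans hμ1)]
      linarith

theorem monotoneOn (hc : IsCommuter μ h) (hμ0 : 0 ≤ μ) (hμ1 : μ ≤ 1) :
    MonotoneOn h (Icc 0 μ) := by
  intro y hy w hw hyw
  refine le_of_forall_pos_le_add fun ε hε => ?_
  obtain ⟨k, hk⟩ := exists_pow_lt_of_lt_one hε (by norm_num : (1 / 2 : ℝ) < 1)
  linarith [hc.apply_le_apply_add_half_pow hμ0 hμ1 k hy hw hyw]

theorem farFromOdd_apply (hc : IsCommuter μ h) (hμ0 : 0 ≤ μ) (hμ1 : μ ≤ 1) {y : ℝ}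
    (hy : y ∈ Icc 0 μ) : FarFromOdd (1 - h μ) (h y) := by
  have hy_le : h y ≤ h μ := hc.monotoneOn hμ0 hμ1 hy ⟨hμ0, le_rfl⟩ hy.2
  have hy_nonneg : 0 ≤ h y := (hc.1 y ⟨hy.1, hy.2.trans hμ1⟩).1
  have hμ_nonneg : 0 ≤ h μ := (hc.1 μ ⟨hμ0, hμ1⟩).1
  intro m
  rcases le_or_gt 0 m with hm | hm
  · have : (0 : ℝ) ≤ m := by exact_mod_cast hm
    rw [abs_sub_comm]
    exact (by linarith : 1 - h μ ≤ 2 * m + 1 - h y).trans (le_abs_self _)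
  · have : (m : ℝ) ≤ -1 := by exact_mod_cast Int.le_sub_one_of_lt hm
    exact (by linarith : 1 - h μ ≤ h y - (2 * m + 1)).trans (le_abs_self _)

theorem exists_two_mul_apply_eq (hc : IsCommuter μ h) (hμ0 : 0 ≤ μ) {x : ℝ}
    (hx : x ∈ Icc 0 1) : ∃ y ∈ Icc 0 μ, 2 * h x = h y ∨ 2 * h x = 2 - h y := by
  rcases le_or_gt x (1 / 2) with hx_half | hx_half
  · exact ⟨2 * μ * x, ⟨by nlinarith [hx.1], by nlinarith⟩,
      Or.inl (by rw [hc.2.1 x hx.1 hx_half]; ring)⟩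
  · exact ⟨2 * μ * (1 - x), ⟨by nlinarith [hx.2], by nlinarith⟩,
      Or.inr (by rw [hc.2.2 x hx_half hx.2]; ring)⟩

theorem farFromOdd_two_pow_succ_mul (hc : IsCommuter μ h) (hμ0 : 0 ≤ μ) {r : ℝ} {n : ℕ}
    (hn : ∀ y ∈ Icc 0 μ, FarFromOdd r (2 ^ n * h y)) {x : ℝ} (hx : x ∈ Icc 0 1) :
    FarFromOdd r (2 ^ (n + 1) * h x) := by
  obtain ⟨y, hy, hxy | hxy⟩ := hc.exists_two_mul_apply_eq hμ0 hx
  · rw [pow_succ, mul_assoc, hxy]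
    exact hn y hy
  · convert (hn y hy).two_mul_sub (2 ^ n) using 1
    rw [pow_succ, mul_assoc, hxy]
    push_cast
    ring

theorem farFromOdd_two_pow_mul (hc : IsCommuter μ h) (hμ0 : 0 ≤ μ) (hμ1 : μ ≤ 1) (n : ℕ) :
    ∀ y ∈ Icc 0 μ, FarFromOdd (1 - h μ) (2 ^ n * h y) := by
  induction n with
  | zero => simpa only [pow_zero, one_mul] using fun y hy => hc.farFromOdd_apply hμ0 hμ1 hy
  | succ n ih => exact fun y hy => hc.farFromOdd_two_pow_succ_mul hμ0 ih ⟨hy.1, hy.2.trans hμ1⟩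

end IsCommuter

/-- For `1/2 < μ ≤ 1`, no point of the union over `n ≥ 1` and `1 ≤ i ≤ 2^(n-1)` of the
open intervals centered at `(2i-1)/2^n` of radius `(1 - h_μ(μ))/2^n` lies in the range
of the commuter `h_μ`. -/
theorem commuter_range_omits (μ : ℝ) (hμ1 : 1/2 < μ) (hμ2 : μ ≤ 1)
    (h : ℝ → ℝ) (hc : IsCommuter μ h) :
    ∀ n : ℕ, 1 ≤ n → ∀ i : ℕ, 1 ≤ i → i ≤ 2^(n-1) → ∀ x ∈ Icc (0:ℝ) 1,
      h x ∉ Ioo ((2*(i:ℝ)-1)/2^n - (1 - h μ)/2^n)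
                ((2*(i:ℝ)-1)/2^n + (1 - h μ)/2^n) := by
  intro n hn i _ _ x hx ⟨hlo, hhi⟩
  have hμ0 : 0 ≤ μ := by linarith
  obtain ⟨k, rfl⟩ := Nat.exists_eq_add_of_le' hn
  have hfar := hc.farFromOdd_two_pow_succ_mul hμ0 (hc.farFromOdd_two_pow_mul hμ0 hμ2 k) hx
    ((i : ℤ) - 1)
  rw [← sub_div, div_lt_iff₀ (by positivity)] at hlo
  rw [← add_div, lt_div_iff₀ (by positivity)] at hhi
  push_cast at hfar
  exact hfar.not_gt (abs_sub_lt_iff.2 ⟨by linarith, by linarith⟩)
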